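/- If W is a broken wheel, then W contains K_{2,3} as an induced minor. -/

import Mathlib

open SimpleGraph

universe u v

section Defs

variable {V : Type u}

/-- An induced minor model of `H` in `G`. -/
def InducedMinorModel {W : Type v} (H : SimpleGraph W) (G : SimpleGraph V)
    (X : W → Set V) : Prop :=
  (∀ w, (X w).Nonempty) ∧ (∀ w, (G.induce (X w)).Connected) ∧
  (Pairwise fun w w' => Disjoint (X w) (X w')) ∧
  (Pairwise fun w w' => ((∃ x ∈ X w, ∃ y ∈ X w', G.Adj x y) ↔ H.Adj w w'))

/-- `G` contains `H` as an induced minor. -/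
def HasInducedMinor {W : Type v} (H : SimpleGraph W) (G : SimpleGraph V) : Prop :=
  ∃ X : W → Set V, InducedMinorModel H G X

/-- The complete bipartite graph `K_{2,3}`. -/
def K23 : SimpleGraph (Fin 2 ⊕ Fin 3) := completeBipartiteGraph (Fin 2) (Fin 3)

/-- `G` (as a whole graph) is a long prism. -/
def IsLongPrism (G : SimpleGraph V) : Prop :=
  ∃ (a₁ a₂ a₃ b₁ b₂ b₃ : V) (P₁ : G.Walk a₁ b₁) (P₂ : G.Walk a₂ b₂) (P₃ : G.Walk a₃ b₃),
    P₁.IsPath ∧ P₂.IsPath ∧ P₃.IsPath ∧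
    1 ≤ P₁.length ∧ 1 ≤ P₂.length ∧ 1 ≤ P₃.length ∧
    (2 ≤ P₁.length ∨ 2 ≤ P₂.length ∨ 2 ≤ P₃.length) ∧
    (∀ x : V, x ∈ P₁.support ∨ x ∈ P₂.support ∨ x ∈ P₃.support) ∧
    (∀ x : V, x ∈ P₁.support → x ∉ P₂.support) ∧
    (∀ x : V, x ∈ P₁.support → x ∉ P₃.support) ∧
    (∀ x : V, x ∈ P₂.support → x ∉ P₃.support) ∧
    (∀ x y : V, G.Adj x y ↔ (s(x, y) ∈ P₁.edges ∨ s(x, y) ∈ P₂.edges ∨ s(x, y) ∈ P₃.edges ∨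
      s(x, y) ∈ ({s(a₁, a₂), s(a₂, a₃), s(a₁, a₃), s(b₁, b₂), s(b₂, b₃), s(b₁, b₃)} :
        Set (Sym2 V))))

/-- `G` (as a whole graph) is a pyramid. -/
def IsPyramid (G : SimpleGraph V) : Prop :=
  ∃ (a b₁ b₂ b₃ : V) (P₁ : G.Walk a b₁) (P₂ : G.Walk a b₂) (P₃ : G.Walk a b₃),
    P₁.IsPath ∧ P₂.IsPath ∧ P₃.IsPath ∧
    1 ≤ P₁.length ∧ 1 ≤ P₂.length ∧ 1 ≤ P₃.length ∧
    ((2 ≤ P₁.length ∧ 2 ≤ P₂.length) ∨ (2 ≤ P₁.length ∧ 2 ≤ P₃.length) ∨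
      (2 ≤ P₂.length ∧ 2 ≤ P₃.length)) ∧
    (∀ x : V, x ∈ P₁.support ∨ x ∈ P₂.support ∨ x ∈ P₃.support) ∧
    (∀ x : V, x ∈ P₁.support → x ∈ P₂.support → x = a) ∧
    (∀ x : V, x ∈ P₁.support → x ∈ P₃.support → x = a) ∧
    (∀ x : V, x ∈ P₂.support → x ∈ P₃.support → x = a) ∧
    (∀ x y : V, G.Adj x y ↔ (s(x, y) ∈ P₁.edges ∨ s(x, y) ∈ P₂.edges ∨ s(x, y) ∈ P₃.edges ∨
      s(x, y) ∈ ({s(b₁, b₂), s(b₂, b₃), s(b₁, b₃)} : Set (Sym2 V))))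

/-- `G` (as a whole graph) is a theta. -/
def IsTheta (G : SimpleGraph V) : Prop :=
  ∃ (a b : V) (P₁ : G.Walk a b) (P₂ : G.Walk a b) (P₃ : G.Walk a b),
    P₁.IsPath ∧ P₂.IsPath ∧ P₃.IsPath ∧
    2 ≤ P₁.length ∧ 2 ≤ P₂.length ∧ 2 ≤ P₃.length ∧
    (∀ x : V, x ∈ P₁.support ∨ x ∈ P₂.support ∨ x ∈ P₃.support) ∧
    (∀ x : V, x ∈ P₁.support → x ∈ P₂.support → x = a ∨ x = b) ∧
    (∀ x : V, x ∈ P₁.support → x ∈ P₃.support → x = a ∨ x = b) ∧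
    (∀ x : V, x ∈ P₂.support → x ∈ P₃.support → x = a ∨ x = b) ∧
    (∀ x y : V, G.Adj x y ↔ (s(x, y) ∈ P₁.edges ∨ s(x, y) ∈ P₂.edges ∨ s(x, y) ∈ P₃.edges))

/-- `G` (as a whole graph) is the cube. -/
def IsCube (G : SimpleGraph V) : Prop :=
  ∃ v₁ v₂ v₃ v₄ v₅ v₆ x y : V,
    [v₁, v₂, v₃, v₄, v₅, v₆, x, y].Nodup ∧
    (∀ u : V, u ∈ [v₁, v₂, v₃, v₄, v₅, v₆, x, y]) ∧
    (∀ u w : V, G.Adj u w ↔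
      s(u, w) ∈ ({s(v₁, v₂), s(v₂, v₃), s(v₃, v₄), s(v₄, v₅), s(v₅, v₆), s(v₆, v₁),
        s(x, v₁), s(x, v₃), s(x, v₅), s(y, v₂), s(y, v₄), s(y, v₆)} : Set (Sym2 V)))

/-- `Q` is a sector of the wheel with rim `C` and center `x`. -/
def IsSectorOf (G : SimpleGraph V) (x : V) {w : V} (C : G.Walk w w)
    {p q : V} (Q : G.Walk p q) : Prop :=
  Q.IsPath ∧ 1 ≤ Q.length ∧ (∀ e ∈ Q.edges, e ∈ C.edges) ∧ G.Adj x p ∧ G.Adj x q ∧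
  (∀ u ∈ Q.support, u ≠ p → u ≠ q → ¬ G.Adj x u)

/-- The closed walk `C` together with the vertex `x` form a wheel in `G`,
i.e. `C` is a hole (a chordless cycle of length at least 4) and `x` has at least
three neighbors on `C`. -/
def IsWheelWith (G : SimpleGraph V) (x : V) {w : V} (C : G.Walk w w) : Prop :=
  C.IsCycle ∧ 4 ≤ C.length ∧ x ∉ C.support ∧
  (∀ y z : V, y ∈ C.support → z ∈ C.support → (G.Adj y z ↔ s(y, z) ∈ C.edges)) ∧
  (∃ n₁ n₂ n₃ : V, n₁ ∈ C.support ∧ n₂ ∈ C.support ∧ n₃ ∈ C.support ∧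
    n₁ ≠ n₂ ∧ n₁ ≠ n₃ ∧ n₂ ≠ n₃ ∧ G.Adj x n₁ ∧ G.Adj x n₂ ∧ G.Adj x n₃)

/-- `G` (as a whole graph) is a broken wheel: a wheel at least two of whose
sectors have length at least 2. -/
def IsBrokenWheel (G : SimpleGraph V) : Prop :=
  ∃ (x w : V) (C : G.Walk w w), IsWheelWith G x C ∧
    (∀ u : V, u = x ∨ u ∈ C.support) ∧
    ∃ (p₁ q₁ p₂ q₂ : V) (Q₁ : G.Walk p₁ q₁) (Q₂ : G.Walk p₂ q₂),
      IsSectorOf G x C Q₁ ∧ IsSectorOf G x C Q₂ ∧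
      2 ≤ Q₁.length ∧ 2 ≤ Q₂.length ∧ (∀ e ∈ Q₁.edges, e ∉ Q₂.edges)

/-- `G` (as a whole graph) belongs to the class `S` (subdivisions of `K_{1,3}`),
with extremities `e₁`, `e₂`, `e₃`. -/
def IsS (G : SimpleGraph V) (e₁ e₂ e₃ : V) : Prop :=
  ∃ (u : V) (P₁ : G.Walk u e₁) (P₂ : G.Walk u e₂) (P₃ : G.Walk u e₃),
    P₁.IsPath ∧ P₂.IsPath ∧ P₃.IsPath ∧
    1 ≤ P₁.length ∧ 1 ≤ P₂.length ∧ 1 ≤ P₃.length ∧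
    (∀ x : V, x ∈ P₁.support ∨ x ∈ P₂.support ∨ x ∈ P₃.support) ∧
    (∀ x : V, x ∈ P₁.support → x ∈ P₂.support → x = u) ∧
    (∀ x : V, x ∈ P₁.support → x ∈ P₃.support → x = u) ∧
    (∀ x : V, x ∈ P₂.support → x ∈ P₃.support → x = u) ∧
    (∀ x y : V, G.Adj x y ↔ (s(x, y) ∈ P₁.edges ∨ s(x, y) ∈ P₂.edges ∨ s(x, y) ∈ P₃.edges))

/-- `G` (as a whole graph) belongs to the class `T`, with extremities `e₁`, `e₂`, `e₃`. -/
def IsT (G : SimpleGraph V) (e₁ e₂ e₃ : V) : Prop :=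
  ∃ (t₁ t₂ t₃ : V) (P₁ : G.Walk t₁ e₁) (P₂ : G.Walk t₂ e₂) (P₃ : G.Walk t₃ e₃),
    P₁.IsPath ∧ P₂.IsPath ∧ P₃.IsPath ∧
    1 ≤ P₁.length ∧ 1 ≤ P₂.length ∧ 1 ≤ P₃.length ∧
    (∀ x : V, x ∈ P₁.support ∨ x ∈ P₂.support ∨ x ∈ P₃.support) ∧
    (∀ x : V, x ∈ P₁.support → x ∉ P₂.support) ∧
    (∀ x : V, x ∈ P₁.support → x ∉ P₃.support) ∧
    (∀ x : V, x ∈ P₂.support → x ∉ P₃.support) ∧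
    (∀ x y : V, G.Adj x y ↔ (s(x, y) ∈ P₁.edges ∨ s(x, y) ∈ P₂.edges ∨ s(x, y) ∈ P₃.edges ∨
      s(x, y) ∈ ({s(t₁, t₂), s(t₂, t₃), s(t₁, t₃)} : Set (Sym2 V))))

/-- `G` (as a whole graph) belongs to the class `M`, with extremities the two
endpoints `e₁`, `e₂` of the path and the center `e₃`. -/
def IsM (G : SimpleGraph V) (e₁ e₂ e₃ : V) : Prop :=
  ∃ P : G.Walk e₁ e₂,
    P.IsPath ∧ e₃ ∉ P.support ∧
    (∀ x : V, x = e₃ ∨ x ∈ P.support) ∧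
    (∀ x y : V, x ∈ P.support → y ∈ P.support → (G.Adj x y ↔ s(x, y) ∈ P.edges)) ∧
    ¬ G.Adj e₃ e₁ ∧ ¬ G.Adj e₃ e₂ ∧
    (∃ u w : V, u ∈ P.support ∧ w ∈ P.support ∧ u ≠ w ∧ G.Adj e₃ u ∧ G.Adj e₃ w)

/-- `G` belongs to `S ∪ T ∪ M` and its set of extremities is exactly `I`. -/
def IsSTMwithExtremities (G : SimpleGraph V) (I : Set V) : Prop :=
  ∃ e₁ e₂ e₃ : V, I = {e₁, e₂, e₃} ∧
    (IsS G e₁ e₂ e₃ ∨ IsT G e₁ e₂ e₃ ∨ IsM G e₁ e₂ e₃)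

/-- The interior of a path (its support minus the two endpoints). -/
def walkInterior {G : SimpleGraph V} {p q : V} (W : G.Walk p q) : Set V :=
  {v | v ∈ W.support ∧ v ≠ p ∧ v ≠ q}

/-- A broken wheel in `G` together with a frame: the rim is the concatenation
`P ++ Q ++ R ++ S` where `P = a…b` and `R = c…d` are sectors of length at least 2
(`a`, `b`, `c`, `d` in clockwise order). -/
structure BWFrame (G : SimpleGraph V) where
  x : V
  a : V
  b : V
  c : V
  d : V
  P : G.Walk a b
  Q : G.Walk b c
  R : G.Walk c d
  S : G.Walk d a
  hP : 2 ≤ P.length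
  hR : 2 ≤ R.length
  nondeg : ¬ (b = c ∧ d = a)
  cyc : (((P.append Q).append R).append S).IsCycle
  len4 : 4 ≤ (((P.append Q).append R).append S).length
  hx : x ∉ (((P.append Q).append R).append S).support
  chordless : ∀ y z : V, y ∈ (((P.append Q).append R).append S).support →
    z ∈ (((P.append Q).append R).append S).support →
    (G.Adj y z ↔ s(y, z) ∈ (((P.append Q).append R).append S).edges)
  adja : G.Adj x a
  adjb : G.Adj x b
  adjc : G.Adj x c
  adjd : G.Adj x d
  secP : ∀ u ∈ P.support, u ≠ a → u ≠ b → ¬ G.Adj x u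
  secR : ∀ u ∈ R.support, u ≠ c → u ≠ d → ¬ G.Adj x u

/-- The rim of a framed broken wheel. -/
def BWFrame.rim {G : SimpleGraph V} (F : BWFrame G) : G.Walk F.a F.a :=
  ((F.P.append F.Q).append F.R).append F.S

/-- The vertex set of a framed broken wheel. -/
def BWFrame.verts {G : SimpleGraph V} (F : BWFrame G) : Set V :=
  insert F.x {v | v ∈ F.rim.support}

/-- Optimality of a framed broken wheel `(W, F)`: no broken wheel of `G` has fewer
vertices, and subject to that the sum of the lengths of `Q` and `S` is minimal. -/
def BWFrame.Optimal {G : SimpleGraph V} (F : BWFrame G) : Prop :=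
  (∀ T : Set V, IsBrokenWheel (G.induce T) → F.verts.ncard ≤ T.ncard) ∧
  (∀ F' : BWFrame G, F'.verts.ncard = F.verts.ncard →
    F.Q.length + F.S.length ≤ F'.Q.length + F'.S.length)

/-- `S` separates `u` and `v` in `G`: both avoid `S` and every walk between them
meets `S`. -/
def Separates (G : SimpleGraph V) (S : Set V) (u v : V) : Prop :=
  u ∉ S ∧ v ∉ S ∧ ∀ p : G.Walk u v, ∃ w ∈ p.support, w ∈ S

/-- `S` is a minimal separator of `G`: a minimal `u,v`-separator for some `u`, `v`. -/
def IsMinimalSeparator (G : SimpleGraph V) (S : Set V) : Prop :=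
  ∃ u v : V, Separates G S u v ∧ ∀ T ⊆ S, Separates G T u v → T = S

/-- `A` is an independent set of `G`. -/
def IsIndepSet (G : SimpleGraph V) (A : Set V) : Prop :=
  ∀ x ∈ A, ∀ y ∈ A, x ≠ y → ¬ G.Adj x y

end Defs

/-! The two sectors `Q₁`, `Q₂` of length at least 2 are edge-disjoint subpaths of the rim, so
after reversing `Q₂` if necessary the rim is the cycle `Q₁ E₁ Q₂ E₂` for two arcs `E₁`, `E₂`.
Split each sector into its end edges and its interior `Mᵢ`: the rim becomes the cycle
`M₁ E₁ M₂ E₂` of four vertex-disjoint paths joined by single edges. Take `E₁`, `E₂` as the two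
branch sets on one side of `K_{2,3}` and `{x}`, `M₁`, `M₂` as the three on the other. Each `Mᵢ`
meets both arcs through the end edges of its sector, and `x` sees the ends of `Q₁` but no
interior vertex of a sector. Since the rim is chordless, an edge between two rim vertices is a
rim edge, which never joins the opposite paths `E₁`, `E₂` or `M₁`, `M₂`. -/

namespace SimpleGraph

open Function

variable {V : Type*} {G : SimpleGraph V}

theorem hasInducedMinor_completeBipartiteGraph {α β : Type*} (X : α → Set V) (Y : β → Set V)
    (hX : ∀ i, (G.induce (X i)).Connected) (hY : ∀ j, (G.induce (Y j)).Connected)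
    (hXX : Pairwise (Disjoint on X)) (hYY : Pairwise (Disjoint on Y))
    (hXY : ∀ i j, Disjoint (X i) (Y j)) (hadj : ∀ i j, ∃ x ∈ X i, ∃ y ∈ Y j, G.Adj x y)
    (hnX : Pairwise fun i i' => ∀ x ∈ X i, ∀ y ∈ X i', ¬ G.Adj x y)
    (hnY : Pairwise fun j j' => ∀ x ∈ Y j, ∀ y ∈ Y j', ¬ G.Adj x y) :
    HasInducedMinor (completeBipartiteGraph α β) G := by
  have nonempty {s : Set V} (hs : (G.induce s).Connected) : s.Nonempty :=
    Set.nonempty_coe_sort.mp hs.nonempty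
  refine ⟨Sum.elim X Y, ?_, ?_, ?_, ?_⟩
  · rintro (i | j)
    exacts [nonempty (hX i), nonempty (hY j)]
  · rintro (i | j)
    exacts [hX i, hY j]
  · rintro (i | j) (i' | j') hne
    · exact hXX (Sum.inl_injective.ne_iff.mp hne)
    · exact hXY i j'
    · exact (hXY i' j).symm
    · exact hYY (Sum.inr_injective.ne_iff.mp hne)
  · rintro (i | j) (i' | j') hne
    · simpa using hnX (Sum.inl_injective.ne_iff.mp hne)
    · simpa using hadj i j'
    · obtain ⟨x, hx, y, hy, hxy⟩ := hadj i' j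
      simpa using ⟨y, hy, x, hx, hxy.symm⟩
    · simpa using hnY (Sum.inr_injective.ne_iff.mp hne)

namespace Walk

theorem IsPath.exists_eq_append_of_edges_subset {u v w : V} {Q : G.Walk u v} {P : G.Walk u w}
    (hQ : Q.IsPath) (hP : P.IsPath) (h : Q.edges ⊆ P.edges) : ∃ D : G.Walk v w, P = Q.append D := by
  induction Q with
  | nil => exact ⟨P, rfl⟩
  | @cons u y v hq Q ih =>
    cases P with
    | nil => simp at h
    | @cons _ z _ hp P =>
      obtain rfl : y = z := by simpa using hP.eq_snd_of_mem_edges (h (by simp))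
      rw [cons_isPath_iff] at hP hQ
      have hQP : Q.edges ⊆ P.edges := fun e he => by
        have := h (List.mem_cons_of_mem _ he)
        rw [edges_cons, List.mem_cons] at this
        rcases this with rfl | he'
        · exact absurd (Q.fst_mem_support_of_mem_edges he) hQ.2
        · exact he'
      obtain ⟨D, rfl⟩ := ih hQ.1 hP.1 hQP
      exact ⟨D, rfl⟩

theorem IsPath.start_eq_or_eq_of_edges_subset {p q u v : V} {Q : G.Walk p q} {P : G.Walk u v}
    (hQ : Q.IsPath) (hP : P.IsPath) (h : Q.edges ⊆ P.edges) (hu : u ∈ Q.support) :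
    u = p ∨ u = q := by
  by_contra! hne
  obtain ⟨i, rfl, hi⟩ := Q.mem_support_iff_exists_getVert.mp hu
  have hi0 : i ≠ 0 := by rintro rfl; simp at hne
  have hil : i < Q.length := lt_of_le_of_ne hi (by rintro rfl; simp at hne)
  have hQ0 : ¬ Q.Nil := not_nil_iff_lt_length.mpr (by omega)
  have hP0 : ¬ P.Nil := fun hP0 =>
    hQ0 (edges_eq_nil.mp (List.subset_nil.mp (edges_eq_nil.mpr hP0 ▸ h)))
  have hsub : Q.toSubgraph.neighborSet (Q.getVert i) ⊆ P.toSubgraph.neighborSet (Q.getVert i) :=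
    fun w hw => adj_toSubgraph_iff_mem_edges.mpr (h (adj_toSubgraph_iff_mem_edges.mp hw))
  have := Set.ncard_le_ncard hsub (by simp)
  rw [hQ.ncard_neighborSet_toSubgraph_internal_eq_two hi0 hil,
    hP.neighborSet_toSubgraph_startpoint hP0, Set.ncard_singleton] at this
  omega

theorem IsPath.exists_eq_append_append_of_edges_subset {p q u v : V} {Q : G.Walk p q}
    {P : G.Walk u v} (hQ : Q.IsPath) (hQ0 : ¬ Q.Nil) (hP : P.IsPath) (h : Q.edges ⊆ P.edges) :
    (∃ (E₁ : G.Walk u p) (E₂ : G.Walk q v), P = E₁.append (Q.append E₂)) ∨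
      ∃ (E₁ : G.Walk u q) (E₂ : G.Walk p v), P = E₁.append (Q.reverse.append E₂) := by
  induction P with
  | nil => exact absurd (edges_eq_nil.mp (List.subset_nil.mp h)) hQ0
  | @cons u z v hp P ih =>
    by_cases hu : u ∈ Q.support
    · rcases hQ.start_eq_or_eq_of_edges_subset hP h hu with rfl | rfl
      · obtain ⟨E₂, hE₂⟩ := hQ.exists_eq_append_of_edges_subset hP h
        exact .inl ⟨.nil, E₂, hE₂⟩
      · obtain ⟨E₂, hE₂⟩ := hQ.reverse.exists_eq_append_of_edges_subset hP
          (by simpa using h)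
        exact .inr ⟨.nil, E₂, hE₂⟩
    · have hQP : Q.edges ⊆ P.edges := fun e he => by
        have := h he
        rw [edges_cons, List.mem_cons] at this
        rcases this with rfl | he'
        · exact absurd (Q.fst_mem_support_of_mem_edges he) hu
        · exact he'
      rcases ih (cons_isPath_iff _ _ |>.mp hP).1 hQP with ⟨E₁, E₂, rfl⟩ | ⟨E₁, E₂, rfl⟩
      · exact .inl ⟨cons hp E₁, E₂, rfl⟩
      · exact .inr ⟨cons hp E₁, E₂, rfl⟩

theorem mem_edges_iff_of_toSubgraph_eq {u v u' v' : V} {p : G.Walk u v} {p' : G.Walk u' v'}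
    (h : p.toSubgraph = p'.toSubgraph) {e : Sym2 V} : e ∈ p.edges ↔ e ∈ p'.edges := by
  rw [← mem_edges_toSubgraph, h, mem_edges_toSubgraph]

theorem mem_support_iff_of_toSubgraph_eq {u v u' v' : V} {p : G.Walk u v} {p' : G.Walk u' v'}
    (h : p.toSubgraph = p'.toSubgraph) {x : V} : x ∈ p.support ↔ x ∈ p'.support := by
  rw [← mem_verts_toSubgraph, h, mem_verts_toSubgraph]

theorem IsCycle.exists_cons_toSubgraph_eq {u y : V} {c : G.Walk u u} (hc : c.IsCycle)
    (h : G.Adj u y) (hy : s(u, y) ∈ c.edges) :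
    ∃ T : G.Walk y u, (cons h T).IsCycle ∧ (cons h T).toSubgraph = c.toSubgraph := by
  have of_snd_eq (c' : G.Walk u u) (hc' : c'.IsCycle) (hy' : y = c'.snd) :
      ∃ T : G.Walk y u, (cons h T).IsCycle ∧ (cons h T).toSubgraph = c'.toSubgraph := by
    obtain ⟨z, h', T, rfl⟩ := not_nil_iff.mp hc'.not_nil
    obtain rfl : y = z := by simpa using hy'
    exact ⟨T, hc', rfl⟩
  have hy : y ∈ c.toSubgraph.neighborSet u := adj_toSubgraph_iff_mem_edges.mpr hy
  rw [hc.neighborSet_toSubgraph_endpoint] at hy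
  rcases hy with hy | hy
  · exact of_snd_eq c hc hy
  · rw [← snd_reverse] at hy
    simpa using of_snd_eq c.reverse hc.reverse hy

theorem IsCycle.exists_isCycle_append_of_edges_subset [DecidableEq V] {w p q : V}
    {c : G.Walk w w} (hc : c.IsCycle) {Q : G.Walk p q} (hQ : Q.IsPath) (hQ0 : ¬ Q.Nil)
    (h : Q.edges ⊆ c.edges) :
    ∃ D : G.Walk q p, (Q.append D).IsCycle ∧ (Q.append D).toSubgraph = c.toSubgraph := by
  cases Q with
  | nil => exact absurd .nil hQ0
  | @cons _ y _ hq Q =>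
    have hp : p ∈ c.support := c.fst_mem_support_of_mem_edges (h (List.mem_cons_self ..))
    obtain ⟨T, hT, hTc⟩ := (hc.rotate hp).exists_cons_toSubgraph_eq hq
      ((rotate_edges c p hp).mem_iff.mpr (h (List.mem_cons_self ..)))
    rw [toSubgraph_rotate] at hTc
    rw [cons_isPath_iff] at hQ
    have hQT : Q.edges ⊆ T.edges := fun e he => by
      have := (mem_edges_iff_of_toSubgraph_eq hTc).mpr (h (List.mem_cons_of_mem _ he))
      rw [edges_cons, List.mem_cons] at this
      rcases this with rfl | he'
      · exact absurd (Q.fst_mem_support_of_mem_edges he) hQ.2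
      · exact he'
    obtain ⟨D, rfl⟩ := hQ.1.exists_eq_append_of_edges_subset
      ((cons_isCycle_iff _ _).mp hT).1 hQT
    exact ⟨D, hT, hTc⟩

theorem exists_eq_cons_concat {u v : V} (p : G.Walk u v) (hp : 2 ≤ p.length) :
    ∃ (a b : V) (ha : G.Adj u a) (hb : G.Adj b v) (q : G.Walk a b), p = cons ha (q.concat hb) := by
  cases p with
  | nil => simp at hp
  | cons h p =>
    have hp : ¬ p.Nil := not_nil_iff_lt_length.mpr (by rw [length_cons] at hp; omega)
    exact ⟨_, _, h, adj_penultimate hp, p.dropLast, by rw [concat_dropLast]⟩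

def necklace {a a' b b' c c' d d' : V} (A : G.Walk a a') (B : G.Walk b b') (C : G.Walk c c')
    (D : G.Walk d d') (hab : G.Adj a' b) (hbc : G.Adj b' c) (hcd : G.Adj c' d)
    (hda : G.Adj d' a) : G.Walk d' d' :=
  cons hda (A.append (cons hab (B.append (cons hbc (C.append (cons hcd D))))))

section Necklace

variable {a a' b b' c c' d d' : V} {A : G.Walk a a'} {B : G.Walk b b'} {C : G.Walk c c'}
  {D : G.Walk d d'} {hab : G.Adj a' b} {hbc : G.Adj b' c} {hcd : G.Adj c' d} {hda : G.Adj d' a}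

theorem support_tail_necklace : (necklace A B C D hab hbc hcd hda).support.tail =
    A.support ++ (B.support ++ (C.support ++ D.support)) := by
  simp [necklace, support_append]

theorem mem_support_necklace {x : V} : x ∈ (necklace A B C D hab hbc hcd hda).support ↔
    x ∈ A.support ∨ x ∈ B.support ∨ x ∈ C.support ∨ x ∈ D.support := by
  rw [← cons_tail_support, List.mem_cons, support_tail_necklace]
  simp only [List.mem_append]
  constructor
  · rintro (rfl | h)
    exacts [.inr (.inr (.inr D.end_mem_support)), h]
  · exact .inr

theorem IsCycle.disjoint_necklace (hN : (necklace A B C D hab hbc hcd hda).IsCycle) :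
    A.support.Disjoint B.support ∧ A.support.Disjoint C.support ∧ A.support.Disjoint D.support ∧
      B.support.Disjoint C.support ∧ B.support.Disjoint D.support ∧
      C.support.Disjoint D.support := by
  have hnd := hN.support_nodup
  rw [support_tail_necklace] at hnd
  simp only [List.nodup_append', List.disjoint_append_right] at hnd
  tauto

theorem IsCycle.necklace_not_adj_opposite (hN : (necklace A B C D hab hbc hcd hda).IsCycle)
    (hch : (necklace A B C D hab hbc hcd hda).IsChordless) {u v : V} (huv : G.Adj u v) :
    ¬ (u ∈ A.support ∧ v ∈ C.support) ∧ ¬ (u ∈ B.support ∧ v ∈ D.support) := by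
  obtain ⟨hAB, hAC, hAD, hBC, hBD, hCD⟩ := hN.disjoint_necklace
  constructor <;> rintro ⟨hu, hv⟩ <;>
  · have he := hch.mem_edges (mem_support_necklace.mpr (by tauto))
      (mem_support_necklace.mpr (by tauto)) huv
    -- an edge of the necklace lies on one of `A`, `B`, `C`, `D` or joins two consecutive ones
    simp only [necklace, edges_cons, edges_append, List.mem_cons, List.mem_append,
      Sym2.eq_iff] at he
    grind [fst_mem_support_of_mem_edges, snd_mem_support_of_mem_edges, start_mem_support,
      end_mem_support, List.Disjoint]

theorem IsCycle.hasInducedMinor_K23_of_necklace {x : V}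
    (hN : (necklace A B C D hab hbc hcd hda).IsCycle)
    (hch : (necklace A B C D hab hbc hcd hda).IsChordless)
    (hx : x ∉ (necklace A B C D hab hbc hcd hda).support) (hxb : G.Adj x b) (hxd : G.Adj x d')
    (hxA : ∀ v ∈ A.support, ¬ G.Adj x v) (hxC : ∀ v ∈ C.support, ¬ G.Adj x v) :
    HasInducedMinor K23 G := by
  obtain ⟨hAB, hAC, hAD, hBC, hBD, hCD⟩ := hN.disjoint_necklace
  simp only [mem_support_necklace, not_or] at hx
  obtain ⟨hAx, hBx, hCx, hDx⟩ := hx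
  have hopp {u v : V} (huv : G.Adj u v) := hN.necklace_not_adj_opposite hch huv
  refine hasInducedMinor_completeBipartiteGraph
    ![{v | v ∈ B.support}, {v | v ∈ D.support}]
    ![{x}, {v | v ∈ A.support}, {v | v ∈ C.support}] ?_ ?_ ?_ ?_ ?_ ?_ ?_ ?_
  · intro i; fin_cases i
    exacts [B.connected_induce_support, D.connected_induce_support]
  · intro j; fin_cases j
    exacts [(⟨.of_subsingleton⟩ : (G.induce {x}).Connected), A.connected_induce_support,
      C.connected_induce_support]
  · intro i j hij; fin_cases i <;> fin_cases j
    exacts [absurd rfl hij, Set.disjoint_left.mpr hBD, Set.disjoint_left.mpr hBD.symm,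
      absurd rfl hij]
  · intro i j hij; fin_cases i <;> fin_cases j
    exacts [absurd rfl hij, Set.disjoint_singleton_left.mpr hAx,
      Set.disjoint_singleton_left.mpr hCx, Set.disjoint_singleton_right.mpr hAx,
      absurd rfl hij, Set.disjoint_left.mpr hAC, Set.disjoint_singleton_right.mpr hCx,
      Set.disjoint_left.mpr hAC.symm, absurd rfl hij]
  · intro i j; fin_cases i <;> fin_cases j
    exacts [Set.disjoint_singleton_right.mpr hBx, Set.disjoint_left.mpr hAB.symm,
      Set.disjoint_left.mpr hBC, Set.disjoint_singleton_right.mpr hDx,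
      Set.disjoint_left.mpr hAD.symm, Set.disjoint_left.mpr hCD.symm]
  · intro i j; fin_cases i <;> fin_cases j
    exacts [⟨b, B.start_mem_support, x, rfl, hxb.symm⟩,
      ⟨b, B.start_mem_support, a', A.end_mem_support, hab.symm⟩,
      ⟨b', B.end_mem_support, c, C.start_mem_support, hbc⟩,
      ⟨d', D.end_mem_support, x, rfl, hxd.symm⟩,
      ⟨d', D.end_mem_support, a, A.start_mem_support, hda⟩,
      ⟨d, D.start_mem_support, c', C.end_mem_support, hcd.symm⟩]
  · intro i j hij; fin_cases i <;> fin_cases j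
    exacts [absurd rfl hij, fun u hu v hv huv => (hopp huv).2 ⟨hu, hv⟩,
      fun u hu v hv huv => (hopp huv.symm).2 ⟨hv, hu⟩, absurd rfl hij]
  · intro i j hij; fin_cases i <;> fin_cases j
    exacts [absurd rfl hij, fun u hu v hv => hu ▸ hxA v hv, fun u hu v hv => hu ▸ hxC v hv,
      fun u hu v hv huv => hxA u hu (hv ▸ huv.symm), absurd rfl hij,
      fun u hu v hv huv => (hopp huv).1 ⟨hu, hv⟩,
      fun u hu v hv huv => hxC u hu (hv ▸ huv.symm),
      fun u hu v hv huv => (hopp huv.symm).1 ⟨hv, hu⟩, absurd rfl hij]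

end Necklace

theorem IsCycle.hasInducedMinor_K23_of_sectors {x p₁ q₁ p₂ q₂ : V} {Q₁ : G.Walk p₁ q₁}
    {E₁ : G.Walk q₁ p₂} {Q₂ : G.Walk p₂ q₂} {E₂ : G.Walk q₂ p₁}
    (hc : (Q₁.append (E₁.append (Q₂.append E₂))).IsCycle)
    (hch : (Q₁.append (E₁.append (Q₂.append E₂))).IsChordless)
    (hx : x ∉ (Q₁.append (E₁.append (Q₂.append E₂))).support)
    (hl₁ : 2 ≤ Q₁.length) (hl₂ : 2 ≤ Q₂.length) (hxp₁ : G.Adj x p₁) (hxq₁ : G.Adj x q₁)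
    (h₁ : ∀ u ∈ Q₁.support, u ≠ p₁ → u ≠ q₁ → ¬ G.Adj x u)
    (h₂ : ∀ u ∈ Q₂.support, u ≠ p₂ → u ≠ q₂ → ¬ G.Adj x u) :
    HasInducedMinor K23 G := by
  obtain ⟨y₁, z₁, hy₁, hz₁, M₁, rfl⟩ := Q₁.exists_eq_cons_concat hl₁
  obtain ⟨y₂, z₂, hy₂, hz₂, M₂, rfl⟩ := Q₂.exists_eq_cons_concat hl₂
  have hN : (cons hy₁ (M₁.concat hz₁)).append (E₁.append ((cons hy₂ (M₂.concat hz₂)).append E₂)) =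
      necklace M₁ E₁ M₂ E₂ hz₁ hy₂ hz₂ hy₁ := by
    simp [necklace, concat_append]
  rw [hN] at hc hch hx
  obtain ⟨hAB, -, hAD, hBC, -, hCD⟩ := hc.disjoint_necklace
  refine hc.hasInducedMinor_K23_of_necklace hch hx hxq₁ hxp₁
    (fun v hv => h₁ v (by simp [hv]) ?_ ?_) (fun v hv => h₂ v (by simp [hv]) ?_ ?_)
  · rintro rfl; exact hAD hv E₂.end_mem_support
  · rintro rfl; exact hAB hv E₁.start_mem_support
  · rintro rfl; exact hBC E₁.end_mem_support hv
  · rintro rfl; exact hCD hv E₂.start_mem_support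

end Walk

end SimpleGraph

open SimpleGraph.Walk in
/-- A broken wheel contains `K_{2,3}` as an induced minor. -/
theorem stmt5 {V : Type u} (W : SimpleGraph V) (h : IsBrokenWheel W) :
    HasInducedMinor K23 W := by
  classical
  obtain ⟨x, w, C, ⟨hC, -, hxC, hchord, -⟩, -, p₁, q₁, p₂, q₂, Q₁, Q₂,
    ⟨hQ₁, -, hQ₁C, hxp₁, hxq₁, hsec₁⟩, ⟨hQ₂, -, hQ₂C, -, -, hsec₂⟩, hl₁, hl₂, hQ₁₂⟩ := h
  have hQ₁0 : ¬ Q₁.Nil := not_nil_iff_lt_length.mpr (by omega)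
  have hQ₂0 : ¬ Q₂.Nil := not_nil_iff_lt_length.mpr (by omega)
  obtain ⟨D, hD, hDC⟩ := hC.exists_isCycle_append_of_edges_subset hQ₁ hQ₁0 hQ₁C
  have hch : (Q₁.append D).IsChordless := by
    rw [← isInduced_toSubgraph, hDC, isInduced_toSubgraph, isChordless_iff_forall_mem_edges]
    exact fun y z hy hz => (hchord y z hy hz).mp
  have hx : x ∉ (Q₁.append D).support :=
    fun hx => hxC ((mem_support_iff_of_toSubgraph_eq hDC).mp hx)
  have hQ₂D : Q₂.edges ⊆ D.edges := fun e he => by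
    have := (mem_edges_iff_of_toSubgraph_eq hDC).mpr (hQ₂C e he)
    rw [edges_append, List.mem_append] at this
    exact this.resolve_left (hQ₁₂ e · he)
  rcases hQ₂.exists_eq_append_append_of_edges_subset hQ₂0 (hD.isPath_of_append_right hQ₁0) hQ₂D
    with ⟨E₁, E₂, rfl⟩ | ⟨E₁, E₂, rfl⟩
  · exact hD.hasInducedMinor_K23_of_sectors hch hx hl₁ hl₂ hxp₁ hxq₁ hsec₁ hsec₂
  · exact hD.hasInducedMinor_K23_of_sectors hch hx hl₁ (by simpa using hl₂) hxp₁ hxq₁ hsec₁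
      fun u hu hq hp => hsec₂ u (by simpa using hu) hp hq
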